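/- Let R be an extended regular expression over an alphabet Σ and let Q be a string over Σ of length n. Then Q ∈ L(R) if and only if M(R)(0, n) holds, i.e., the algorithm correctly reports a match exactly when the edge (g_0, g_n) is present in the match graph of the root of the parse tree. -/

import Mathlib

open Computability

/-- Extended regular expressions over alphabet `α`. -/
inductive ERE (α : Type) : Type
  | eps : ERE α
  | char : α → ERE α
  | concat : ERE α → ERE α → ERE α
  | union : ERE α → ERE α → ERE α
  | inter : ERE α → ERE α → ERE α
  | compl : ERE α → ERE α
  | star : ERE α → ERE α

/-- The language generated by an extended regular expression. -/
def ERE.lang {α : Type} : ERE α → Language α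
  | .eps => 1
  | .char a => {[a]}
  | .concat S T => S.lang * T.lang
  | .union S T => S.lang + T.lang
  | .inter S T => S.lang ⊓ T.lang
  | .compl S => (Set.univ : Set (List α)) \ S.lang
  | .star S => S.lang∗

/-- The substring `Q[i..j)`. -/
def substr {α : Type} (Q : List α) (i j : ℕ) : List α := (Q.drop i).take (j - i)

/-- The match relation `M(R)(i,j)` of the Hopcroft–Ullman dynamic programming algorithm. -/
def ERE.M {α : Type} (Q : List α) : ERE α → ℕ → ℕ → Prop
  | .eps, i, j => i = j ∧ j ≤ Q.length
  | .char a, i, j => j = i + 1 ∧ j ≤ Q.length ∧ Q[i]? = some a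
  | .concat S T, i, j => ∃ l, S.M Q i l ∧ T.M Q l j
  | .union S T, i, j => S.M Q i j ∨ T.M Q i j
  | .inter S T, i, j => S.M Q i j ∧ T.M Q i j
  | .compl S, i, j => i ≤ j ∧ j ≤ Q.length ∧ ¬ S.M Q i j
  | .star S, i, j => i ≤ j ∧ j ≤ Q.length ∧ Relation.ReflTransGen (S.M Q) i j

/-! By induction on `R`, `M(R)(i, j)` holds iff `i ≤ j ≤ |Q|` and `Q[i..j) ∈ L(R)`; at `(0, |Q|)`
the substring is `Q` itself. Concatenation works because a factorisation `u ++ v` of `Q[i..j)`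
is its split at position `i + |u|`; star because a path `i = l₀ → l₁ → ⋯ → l_k = j` of
`M(S)`-edges is the same as a factorisation of `Q[i..j)` into `k` words of `L(S)`. -/

section Substring

variable {α : Type} (Q : List α)

theorem substr_length {i j : ℕ} (hj : j ≤ Q.length) : (substr Q i j).length = j - i := by
  simp only [substr, List.length_take, List.length_drop]
  omega

theorem substr_self (i : ℕ) : substr Q i i = [] := by
  simp only [substr, Nat.sub_self, List.take_zero]

theorem substr_zero_length : substr Q 0 Q.length = Q := by
  simp only [substr, List.drop_zero, Nat.sub_zero, List.take_length]

theorem substr_succ {i : ℕ} (hi : i < Q.length) : substr Q i (i + 1) = [Q[i]] := by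
  rw [substr, List.drop_eq_getElem_cons hi, Nat.add_sub_cancel_left, List.take_succ_cons,
    List.take_zero]

theorem substr_append {i l j : ℕ} (hil : i ≤ l) (hlj : l ≤ j) :
    substr Q i l ++ substr Q l j = substr Q i j := by
  obtain ⟨a, rfl⟩ := Nat.exists_eq_add_of_le hil
  obtain ⟨b, rfl⟩ := Nat.exists_eq_add_of_le hlj
  simp only [substr, Nat.add_sub_cancel_left, Nat.add_assoc, List.take_add, List.drop_drop,
    Nat.add_sub_add_left]

theorem substr_eq_append {i j : ℕ} {u v : List α} (hij : i ≤ j) (hj : j ≤ Q.length)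
    (h : substr Q i j = u ++ v) :
    i + u.length ≤ j ∧ substr Q i (i + u.length) = u ∧ substr Q (i + u.length) j = v := by
  have hlen : u.length + v.length = j - i := by
    rw [← List.length_append, ← h, substr_length Q hj]
  have hsplit : i + u.length ≤ j := by omega
  have hprefix : (substr Q i (i + u.length)).length = u.length := by
    rw [substr_length Q (by omega)]
    omega
  rw [← substr_append Q (Nat.le_add_right i u.length) hsplit] at h
  exact ⟨hsplit, List.append_inj h hprefix⟩

end Substring

namespace Language

variable {α : Type}

def matchRel (L : Language α) (Q : List α) (i j : ℕ) : Prop :=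
  i ≤ j ∧ j ≤ Q.length ∧ substr Q i j ∈ L

variable (Q : List α) {i j : ℕ}

theorem matchRel_mono {L L' : Language α} (hLL' : L ≤ L') (h : L.matchRel Q i j) :
    L'.matchRel Q i j :=
  ⟨h.1, h.2.1, hLL' h.2.2⟩

theorem matchRel_one : (1 : Language α).matchRel Q i j ↔ i = j ∧ j ≤ Q.length := by
  constructor
  · rintro ⟨hij, hj, hnil⟩
    have hlen := substr_length Q (i := i) hj
    rw [(mem_one _).mp hnil, List.length_nil] at hlen
    exact ⟨by omega, hj⟩
  · rintro ⟨rfl, hj⟩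
    exact ⟨le_rfl, hj, (mem_one _).mpr (substr_self Q i)⟩

theorem matchRel_singleton (a : α) :
    ({[a]} : Language α).matchRel Q i j ↔ j = i + 1 ∧ j ≤ Q.length ∧ Q[i]? = some a := by
  constructor
  · rintro ⟨hij, hj, hmem⟩
    have hlen := substr_length Q (i := i) hj
    rw [Set.mem_singleton_iff.mp hmem, List.length_singleton] at hlen
    obtain rfl : j = i + 1 := by omega
    have hi : i < Q.length := by omega
    have hQi : [Q[i]] = [a] := (substr_succ Q hi).symm.trans hmem
    exact ⟨rfl, hj, by rw [List.getElem?_eq_getElem hi, List.singleton_inj.mp hQi]⟩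
  · rintro ⟨rfl, hj, hQi⟩
    obtain ⟨hi, rfl⟩ := List.getElem?_eq_some_iff.mp hQi
    exact ⟨by omega, hj, substr_succ Q hi⟩

theorem matchRel_add (L₁ L₂ : Language α) :
    (L₁ + L₂).matchRel Q i j ↔ L₁.matchRel Q i j ∨ L₂.matchRel Q i j := by
  simp only [matchRel, mem_add]
  tauto

theorem matchRel_inf (L₁ L₂ : Language α) :
    (L₁ ⊓ L₂).matchRel Q i j ↔ L₁.matchRel Q i j ∧ L₂.matchRel Q i j := by
  simp only [matchRel, mem_inf]
  tauto

theorem matchRel_univ_sdiff (L : Language α) :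
    ((Set.univ : Set (List α)) \ L : Language α).matchRel Q i j ↔
      i ≤ j ∧ j ≤ Q.length ∧ ¬ L.matchRel Q i j := by
  change _ ∧ _ ∧ (_ ∈ Set.univ ∧ _ ∉ L) ↔ _
  simp only [Set.mem_univ, true_and, matchRel]
  tauto

theorem matchRel_mul (L₁ L₂ : Language α) :
    (L₁ * L₂).matchRel Q i j ↔ ∃ l, L₁.matchRel Q i l ∧ L₂.matchRel Q l j := by
  constructor
  · rintro ⟨hij, hj, u, hu, v, hv, huv⟩
    obtain ⟨hsplit, hprefix, hsuffix⟩ := substr_eq_append Q hij hj huv.symm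
    exact ⟨i + u.length, ⟨by omega, by omega, by rwa [hprefix]⟩, ⟨hsplit, hj, hsuffix ▸ hv⟩⟩
  · rintro ⟨l, ⟨hil, hl, hu⟩, ⟨hlj, hj, hv⟩⟩
    exact ⟨hil.trans hlj, hj, _, hu, _, hv, substr_append Q hil hlj⟩

theorem reflTransGen_matchRel_of_eq_flatten (L : Language α) (hj : j ≤ Q.length) :
    ∀ (W : List (List α)) {i : ℕ}, i ≤ j → (∀ w ∈ W, w ∈ L) → substr Q i j = W.flatten →
      Relation.ReflTransGen (L.matchRel Q) i j
  | [], i, hij, _, hnil => by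
    have hlen := substr_length Q (i := i) hj
    rw [hnil, List.flatten_nil, List.length_nil] at hlen
    obtain rfl : i = j := by omega
    exact .refl
  | w :: W, i, hij, hW, hflat => by
    obtain ⟨hsplit, hprefix, hsuffix⟩ := substr_eq_append Q hij hj hflat
    have hhead : L.matchRel Q i (i + w.length) :=
      ⟨by omega, by omega, by rw [hprefix]; exact hW w List.mem_cons_self⟩
    exact .head hhead <| reflTransGen_matchRel_of_eq_flatten L hj W hsplit
      (fun w' hw' => hW w' (List.mem_cons_of_mem w hw')) hsuffix

theorem matchRel_kstar (L : Language α) :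
    L∗.matchRel Q i j ↔
      i ≤ j ∧ j ≤ Q.length ∧ Relation.ReflTransGen (L.matchRel Q) i j := by
  constructor
  · rintro ⟨hij, hj, hmem⟩
    obtain ⟨W, hflat, hW⟩ := mem_kstar.mp hmem
    exact ⟨hij, hj, reflTransGen_matchRel_of_eq_flatten Q L hj W hij hW hflat⟩
  · rintro ⟨-, hj, hpath⟩
    induction hpath using Relation.ReflTransGen.head_induction_on with
    | refl => exact ⟨le_rfl, hj, (substr_self Q j).symm ▸ nil_mem_kstar L⟩
    | head hstep _ hrest =>
      exact matchRel_mono Q mul_kstar_le_kstar ((matchRel_mul Q L L∗).mpr ⟨_, hstep, hrest⟩)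

end Language

theorem ERE.M_eq_matchRel {α : Type} (Q : List α) (R : ERE α) : R.M Q = R.lang.matchRel Q := by
  induction R with
  | eps => ext i j; simp only [ERE.M, ERE.lang, Language.matchRel_one]
  | char a => ext i j; simp only [ERE.M, ERE.lang, Language.matchRel_singleton]
  | concat S T ihS ihT => ext i j; simp only [ERE.M, ERE.lang, Language.matchRel_mul, ihS, ihT]
  | union S T ihS ihT => ext i j; simp only [ERE.M, ERE.lang, Language.matchRel_add, ihS, ihT]
  | inter S T ihS ihT => ext i j; simp only [ERE.M, ERE.lang, Language.matchRel_inf, ihS, ihT]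
  | compl S ihS => ext i j; simp only [ERE.M, ERE.lang, Language.matchRel_univ_sdiff, ihS]
  | star S ihS => ext i j; simp only [ERE.M, ERE.lang, Language.matchRel_kstar, ihS]

/-- The algorithm correctly reports a match: `Q ∈ L(R)` iff the edge `(g_0, g_n)` is
present in the match graph of the root of the parse tree, i.e. iff `M(R)(0, n)` holds. -/
theorem dynamicProgramming_report {α : Type} (R : ERE α) (Q : List α) (n : ℕ)
    (hn : n = Q.length) :
    Q ∈ R.lang ↔ R.M Q 0 n := by
  subst hn
  simp [ERE.M_eq_matchRel, Language.matchRel, substr_zero_length]
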